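/- arXiv:1112.3086 — 5 statements merged into one kernel-verified Lean document; each statement's English description precedes it below -/
import Mathlib

section
/- Let C be a convex set in a Banach space X, let 0 < α ≤ β, and let V be an α-separated, β-dense subset of C. Define a graph G on V by joining u,v iff ‖u−v‖ ≤ 3β. Then for all distinct u,v ∈ V, if ‖u−v‖ > 2β then d_G(u,v) ≤ ⌊‖u−v‖/β⌋ − 1. -/
/-!
The point `w` of the segment `[u, v]` at distance `2β` from `u` lies in `C` by convexity, and a
vertex `y ∈ V` within `β` of `w` is a neighbour of `u` that is at least `β` closer to `v`. So each
edge gains `β` in distance to `v` until the remaining distance is at most `3β`, and one more edge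
reaches `v`.
-/

/-- The `(C,α,β)`-graph on a subset `V` of a normed space: vertices `u, v ∈ V` are
adjacent iff `u ≠ v` and `‖u − v‖ ≤ 3β`. -/
def cabGraph {X : Type*} [NormedAddCommGroup X] (V : Set X) (β : ℝ) :
    SimpleGraph V :=
  SimpleGraph.fromRel (fun u v => ‖(u : X) - (v : X)‖ ≤ 3 * β)

theorem cabGraph_adj_of_dist_le {X : Type*} [NormedAddCommGroup X] {V : Set X} {β : ℝ}
    {u v : V} (hne : u ≠ v) (h : dist u v ≤ 3 * β) : (cabGraph V β).Adj u v :=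
  (SimpleGraph.fromRel_adj ..).2 ⟨hne, Or.inl (by rwa [← dist_eq_norm])⟩

section

variable {X : Type*} [NormedAddCommGroup X] [NormedSpace ℝ X]

theorem Convex.exists_mem_dist_eq_dist_sub {C : Set X} (hC : Convex ℝ C) {u v : X}
    (hu : u ∈ C) (hv : v ∈ C) {r : ℝ} (hr₀ : 0 ≤ r) (hr : r ≤ dist u v) :
    ∃ w ∈ C, dist u w = r ∧ dist w v = dist u v - r := by
  rcases hr₀.eq_or_lt with rfl | hr₀
  · exact ⟨u, hu, dist_self u, by rw [sub_zero]⟩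
  have hd : 0 < dist u v := hr₀.trans_le hr
  have ht : r / dist u v ∈ Set.Icc (0 : ℝ) 1 :=
    ⟨by positivity, (div_le_one hd).2 hr⟩
  refine ⟨AffineMap.lineMap u v (r / dist u v), hC.lineMap_mem hu hv ht, ?_, ?_⟩
  · rw [dist_left_lineMap, Real.norm_of_nonneg ht.1, div_mul_cancel₀ _ hd.ne']
  · rw [dist_lineMap_right, Real.norm_of_nonneg (sub_nonneg.2 ht.2), sub_mul,
      div_mul_cancel₀ _ hd.ne', one_mul]

theorem Convex.exists_mem_dense_step_toward {C V : Set X} {β : ℝ} (hC : Convex ℝ C)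
    (hdense : ∀ x ∈ C, ∃ y ∈ V, dist x y ≤ β) {u v : X} (hu : u ∈ C) (hv : v ∈ C)
    (hβ : 0 ≤ β) (huv : 2 * β ≤ dist u v) :
    ∃ y ∈ V, β ≤ dist u y ∧ dist u y ≤ 3 * β ∧
      dist u v - 3 * β ≤ dist y v ∧ dist y v ≤ dist u v - β := by
  obtain ⟨w, hwC, huw, hwv⟩ := hC.exists_mem_dist_eq_dist_sub hu hv (by positivity) huv
  obtain ⟨y, hyV, hwy⟩ := hdense w hwC
  refine ⟨y, hyV, ?_, ?_, ?_, ?_⟩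
  · linarith [dist_triangle u y w, dist_comm w y]
  · linarith [dist_triangle u w y]
  · linarith [dist_triangle w y v]
  · linarith [dist_triangle y w v, dist_comm w y]

theorem cabGraph_exists_walk_length_le {C V : Set X} {β : ℝ} (hC : Convex ℝ C) (hVC : V ⊆ C)
    (hdense : ∀ x ∈ C, ∃ y ∈ V, dist x y ≤ β) (hβ : 0 < β) (n : ℕ) (u v : V) (hne : u ≠ v)
    (hn : dist u v ≤ n * β) :
    ∃ p : (cabGraph V β).Walk u v, (p.length : ℤ) ≤ max 1 (⌊dist u v / β⌋ - 1) := by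
  induction n generalizing u with
  | zero => simp [dist_le_zero, hne] at hn
  | succ n ih =>
    by_cases hnear : dist u v ≤ 3 * β
    · exact ⟨(cabGraph_adj_of_dist_le hne hnear).toWalk, by simp⟩
    replace hnear := not_le.1 hnear
    obtain ⟨y, hyV, hyu_ge, hyu_le, hyv_ge, hyv_le⟩ := hC.exists_mem_dense_step_toward hdense
      (hVC u.2) (hVC v.2) hβ.le (by rw [← Subtype.dist_eq]; linarith)
    set y' : V := ⟨y, hyV⟩
    change β ≤ dist u y' at hyu_ge
    change dist u y' ≤ 3 * β at hyu_le
    change dist u v - 3 * β ≤ dist y' v at hyv_ge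
    change dist y' v ≤ dist u v - β at hyv_le
    have hyu : u ≠ y' := fun h => by rw [← h, dist_self] at hyu_ge; linarith
    have hyv : y' ≠ v := fun h => by rw [h, dist_self] at hyv_ge; linarith
    obtain ⟨p, hp⟩ := ih y' hyv (by push_cast at hn; linarith)
    have hfloor : ⌊dist y' v / β⌋ ≤ ⌊dist u v / β⌋ - 1 := by
      rw [← Int.floor_sub_one, div_sub_one hβ.ne']
      exact Int.floor_mono (div_le_div_of_nonneg_right hyv_le hβ.le)
    have hthree : 3 ≤ ⌊dist u v / β⌋ :=
      Int.le_floor.2 (by push_cast; rw [le_div_iff₀ hβ]; exact hnear.le)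
    refine ⟨.cons (cabGraph_adj_of_dist_le hyu hyu_le) p, ?_⟩
    rw [SimpleGraph.Walk.length_cons]
    push_cast
    omega

end

theorem cabGraph_dist_le_floor_sub_one_general
    {X : Type*} [NormedAddCommGroup X] [NormedSpace ℝ X]
    (C : Set X) (hC : Convex ℝ C) (α β : ℝ) (hα : 0 < α) (hαβ : α ≤ β)
    (V : Set X) (hVC : V ⊆ C)
    (hdense : ∀ x ∈ C, ∃ y ∈ V, dist x y ≤ β) :
    ∀ u v : V, u ≠ v → 2 * β < ‖(u : X) - (v : X)‖ →
      ((cabGraph V β).dist u v : ℤ) ≤ ⌊‖(u : X) - (v : X)‖ / β⌋ - 1 := by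
  intro u v hne hfar
  have hβ : 0 < β := hα.trans_le hαβ
  rw [← dist_eq_norm, ← Subtype.dist_eq] at hfar ⊢
  obtain ⟨p, hp⟩ := cabGraph_exists_walk_length_le hC hVC hdense hβ ⌈dist u v / β⌉₊ u v hne
    ((div_le_iff₀ hβ).1 (Nat.le_ceil _))
  have htwo : 2 ≤ ⌊dist u v / β⌋ :=
    Int.le_floor.2 (by push_cast; rw [le_div_iff₀ hβ]; exact hfar.le)
  calc ((cabGraph V β).dist u v : ℤ) ≤ p.length := by exact_mod_cast SimpleGraph.dist_le p
    _ ≤ ⌊dist u v / β⌋ - 1 := by omega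

theorem cabGraph_dist_le_floor_sub_one
    {X : Type*} [NormedAddCommGroup X] [NormedSpace ℝ X] [CompleteSpace X]
    (C : Set X) (hC : Convex ℝ C) (α β : ℝ) (hα : 0 < α) (hαβ : α ≤ β)
    (V : Set X) (hVC : V ⊆ C)
    (hdense : ∀ x ∈ C, ∃ y ∈ V, dist x y ≤ β)
    (hsep : ∀ x ∈ V, ∀ y ∈ V, x ≠ y → α ≤ dist x y) :
    ∀ u v : V, u ≠ v → 2 * β < ‖(u : X) - (v : X)‖ →
      ((cabGraph V β).dist u v : ℤ) ≤ ⌊‖(u : X) - (v : X)‖ / β⌋ - 1 :=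
  cabGraph_dist_le_floor_sub_one_general C hC α β hα hαβ V hVC hdense
end

section
/- Let C be a convex set in a Banach space X, let 0 < α ≤ β, and let V be an α-separated, β-dense subset of C. Let G be the graph on V joining u,v iff ‖u−v‖ ≤ 3β, with shortest path metric d_G. Then for all distinct u,v ∈ V: d_G(u,v) ≤ max{1/α, 1/β}·‖u−v‖, i.e., the natural embedding (V,d_G) → X has inverse Lipschitz constant at most max{1/α, 1/β}. -/
theorem exists_walk_length_le_dist_div {V : Type*} [PseudoMetricSpace V]
    (G : SimpleGraph V) {α : ℝ} (hα : 0 < α) (hsep : ∀ u v : V, u ≠ v → α ≤ dist u v)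
    (hstep : ∀ u v : V, u ≠ v → G.Adj u v ∨ ∃ w, G.Adj u w ∧ dist w v ≤ dist u v - α)
    (u v : V) : ∃ p : G.Walk u v, (p.length : ℝ) ≤ dist u v / α := by
  suffices h : ∀ n : ℕ, ∀ u, dist u v ≤ n * α → ∃ p : G.Walk u v, (p.length : ℝ) ≤ dist u v / α by
    refine h ⌈dist u v / α⌉₊ u ?_
    rw [← div_le_iff₀ hα]
    exact Nat.le_ceil _
  intro n
  induction n with
  | zero =>
    intro u hu
    obtain rfl : u = v := by
      by_contra huv
      simp only [Nat.cast_zero, zero_mul] at hu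
      linarith [hsep u v huv]
    exact ⟨.nil, by simp⟩
  | succ n ih =>
    intro u hu
    obtain rfl | huv := eq_or_ne u v
    · exact ⟨.nil, by simp⟩
    have hone_le : 1 ≤ dist u v / α := (one_le_div hα).2 (hsep u v huv)
    obtain hadj | ⟨w, hadj, hcloser⟩ := hstep u v huv
    · exact ⟨hadj.toWalk, by simpa using hone_le⟩
    obtain ⟨p, hp⟩ := ih w (by push_cast at hu; linarith)
    refine ⟨.cons hadj p, ?_⟩
    calc ((p.cons hadj).length : ℝ) = p.length + 1 := by simp
      _ ≤ (dist u v - α) / α + 1 := by gcongr; exact hp.trans (by gcongr)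
      _ = dist u v / α := by field_simp; ring

theorem Convex.exists_mem_dist_le_of_dense {X : Type*} [NormedAddCommGroup X] [NormedSpace ℝ X]
    {C V : Set X} {β : ℝ} (hC : Convex ℝ C) (hdense : ∀ x ∈ C, ∃ y ∈ V, dist x y ≤ β)
    (hβ : 0 < β) {u v : X} (hu : u ∈ C) (hv : v ∈ C) (huv : 2 * β ≤ dist u v) :
    ∃ w ∈ V, dist u w ≤ 3 * β ∧ dist w v ≤ dist u v - β := by
  have hd : 0 < dist u v := by linarith
  have hθ : 2 * β / dist u v ∈ Set.Icc (0 : ℝ) 1 :=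
    ⟨by positivity, (div_le_one hd).2 huv⟩
  set x := AffineMap.lineMap u v (2 * β / dist u v)
  obtain ⟨w, hw, hxw⟩ := hdense x (hC.lineMap_mem hu hv hθ)
  have hxu : dist x u = 2 * β := by
    rw [dist_lineMap_left, Real.norm_of_nonneg hθ.1, div_mul_cancel₀ _ hd.ne']
  have hxv : dist x v = dist u v - 2 * β := by
    rw [dist_lineMap_right, Real.norm_of_nonneg (sub_nonneg.2 hθ.2)]
    field_simp
  refine ⟨w, hw, ?_, ?_⟩
  · linarith [dist_triangle u x w, dist_comm x u]
  · linarith [dist_triangle w x v, dist_comm x w]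

section cabGraph

variable {X : Type*} [NormedAddCommGroup X] {V : Set X} {β : ℝ}

theorem cabGraph_adj {u v : V} : (cabGraph V β).Adj u v ↔ u ≠ v ∧ dist u v ≤ 3 * β := by
  simp [cabGraph, Subtype.dist_eq, dist_eq_norm, norm_sub_rev]

theorem cabGraph_adj_or_exists_adj_closer [NormedSpace ℝ X] {C : Set X} {α : ℝ}
    (hC : Convex ℝ C) (hVC : V ⊆ C) (hdense : ∀ x ∈ C, ∃ y ∈ V, dist x y ≤ β)
    (hα : 0 < α) (hαβ : α ≤ β) (u v : V) (huv : u ≠ v) :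
    (cabGraph V β).Adj u v ∨ ∃ w, (cabGraph V β).Adj u w ∧ dist w v ≤ dist u v - α := by
  by_cases hnear : dist u v ≤ 3 * β
  · exact .inl (cabGraph_adj.2 ⟨huv, hnear⟩)
  obtain ⟨w, hw, huw, hwv⟩ := hC.exists_mem_dist_le_of_dense hdense (hα.trans_le hαβ)
    (hVC u.2) (hVC v.2) (by rw [← Subtype.dist_eq]; linarith)
  refine .inr ⟨⟨w, hw⟩, cabGraph_adj.2 ⟨?_, huw⟩, ?_⟩
  · rintro rfl
    linarith
  · rw [Subtype.dist_eq, Subtype.dist_eq]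
    linarith

end cabGraph

theorem cabGraph_inverse_lipschitz_general
    {X : Type*} [NormedAddCommGroup X] [NormedSpace ℝ X]
    (C : Set X) (hC : Convex ℝ C) (α β : ℝ) (hα : 0 < α) (hαβ : α ≤ β)
    (V : Set X) (hVC : V ⊆ C)
    (hdense : ∀ x ∈ C, ∃ y ∈ V, dist x y ≤ β)
    (hsep : ∀ x ∈ V, ∀ y ∈ V, x ≠ y → α ≤ dist x y) :
    ∀ u v : V, u ≠ v →
      ((cabGraph V β).dist u v : ℝ) ≤ max (1 / α) (1 / β) * ‖(u : X) - (v : X)‖ := by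
  intro u v _
  obtain ⟨p, hp⟩ := exists_walk_length_le_dist_div (cabGraph V β) hα
    (fun u v huv => hsep u u.2 v v.2 (Subtype.coe_ne_coe.2 huv))
    (cabGraph_adj_or_exists_adj_closer hC hVC hdense hα hαβ) u v
  rw [max_eq_left (one_div_le_one_div_of_le hα hαβ), one_div_mul_eq_div, ← dist_eq_norm]
  exact (Nat.cast_le.2 (SimpleGraph.dist_le p)).trans hp

theorem cabGraph_inverse_lipschitz
    {X : Type*} [NormedAddCommGroup X] [NormedSpace ℝ X] [CompleteSpace X]
    (C : Set X) (hC : Convex ℝ C) (α β : ℝ) (hα : 0 < α) (hαβ : α ≤ β)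
    (V : Set X) (hVC : V ⊆ C)
    (hdense : ∀ x ∈ C, ∃ y ∈ V, dist x y ≤ β)
    (hsep : ∀ x ∈ V, ∀ y ∈ V, x ≠ y → α ≤ dist x y) :
    ∀ u v : V, u ≠ v →
      ((cabGraph V β).dist u v : ℝ) ≤ max (1 / α) (1 / β) * ‖(u : X) - (v : X)‖ :=
  cabGraph_inverse_lipschitz_general C hC α β hα hαβ V hVC hdense hsep
end

section
/- Let G be a finite connected graph, let e(G) denote the number of edges of G, and let H be the graph constructed from G and M ∈ ℕ as follows: for each vertex v of G take a 'short' path p_v of length e(G); label the vertices of each short path monotonically by the edges of G in a fixed order; for each edge uv of G, join the vertex of p_u labelled uv to the vertex of p_v labelled uv by a 'long' path of length M. Define ψ: V(G) → V(H) by sending each vertex u to the vertex of p_u labelled by one fixed edge p. Then for all u,v ∈ V(G): M·d_G(u,v) ≤ d_H(ψ(u),ψ(v)) ≤ (2e(G)+M)·d_G(u,v). -/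
/-- The graph `H` built from a finite graph `G` with `k = e(G)` edges (enumerated by
`label`): each vertex `v` of `G` is replaced by a short path `p_v` with vertices
`(v, 0), …, (v, k)`, the vertex `(v, label e)` being labelled by the edge `e`; each
edge `e = uv` of `G` is replaced by a long path of `M` edges joining the vertex of
`p_u` labelled `e` to the vertex of `p_v` labelled `e`, through `M − 1` internal
vertices `(e, 0), …, (e, M − 2)` (for `M = 1` the two labelled vertices are joined
directly). -/
def expandedGraph {V : Type*} [LinearOrder V] (G : SimpleGraph V) (k M : ℕ)
    (label : G.edgeSet ≃ Fin k) :
    SimpleGraph ((V × Fin (k + 1)) ⊕ (G.edgeSet × Fin (M - 1))) :=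
  SimpleGraph.fromRel (fun x y =>
    match x, y with
    | Sum.inl (a, i), Sum.inl (b, j) =>
        (a = b ∧ j.val = i.val + 1) ∨
        (M = 1 ∧ i = j ∧ ∃ e : G.edgeSet, ((label e : Fin k) : ℕ) = i.val ∧
          (e : Sym2 V) = s(a, b) ∧ a ≠ b)
    | Sum.inl (a, i), Sum.inr (e, t) =>
        i.val = ((label e : Fin k) : ℕ) ∧
        ((∃ b, (e : Sym2 V) = s(a, b) ∧ a < b ∧ t.val = 0) ∨
         (∃ b, (e : Sym2 V) = s(b, a) ∧ b < a ∧ t.val = M - 2))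
    | Sum.inr (e, t), Sum.inr (e', t') =>
        e = e' ∧ (t'.val = t.val + 1 ∨ t.val = t'.val + 1)
    | Sum.inr _, Sum.inl _ => False)

/-- The map `ψ` sending a vertex `u` of `G` to the vertex of the short path `p_u`
labelled by the fixed edge `p`. -/
def psiMap {V : Type*} [LinearOrder V] (G : SimpleGraph V) (k M : ℕ)
    (label : G.edgeSet ≃ Fin k) (p : G.edgeSet) (u : V) :
    (V × Fin (k + 1)) ⊕ (G.edgeSet × Fin (M - 1)) :=
  Sum.inl (u, (label p).castSucc)

/-!
Upper bound: a shortest `uv`-path in `G` lifts edge by edge to a walk in `H`, each edge `ab`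
costing at most `k` steps along `p_a` to the vertex labelled `ab`, the `M` steps of the long
path of `ab`, and at most `k` steps back along `p_b`.

Lower bound: the potential `M · d_G(u, a)` on the short path `p_a`, interpolated linearly
along every long path, changes by at most one along each edge of `H`, so it is bounded by
`d_H(ψ u, ·)`, and it takes the value `M · d_G(u, v)` at `ψ v`.
-/

namespace SimpleGraph

variable {V W : Type*} {G : SimpleGraph V} {H : SimpleGraph W}

theorem exists_walk_length_eq_of_adj_succ {n : ℕ} {f : Fin n → W}
    (hf : ∀ i j : Fin n, j.val = i.val + 1 → H.Adj (f i) (f j)) {i j : Fin n} (hij : i ≤ j) :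
    ∃ w : H.Walk (f i) (f j), w.length = j.val - i.val := by
  obtain ⟨d, hd⟩ : ∃ d, j.val = i.val + d := ⟨j.val - i.val, by omega⟩
  induction d generalizing j with
  | zero => exact ⟨.copy .nil rfl (congrArg f (Fin.ext hd.symm)), by simp [hd]⟩
  | succ d ih =>
    have hj := j.isLt
    obtain ⟨w, hw⟩ := ih (j := ⟨i.val + d, by omega⟩) (by simp [Fin.le_def]) rfl
    exact ⟨w.concat (hf _ _ hd), by rw [Walk.length_concat, hw, Fin.val_mk]; omega⟩

theorem exists_walk_length_le_of_adj_succ {n : ℕ} {f : Fin n → W}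
    (hf : ∀ i j : Fin n, j.val = i.val + 1 → H.Adj (f i) (f j)) (i j : Fin n) :
    ∃ w : H.Walk (f i) (f j), w.length ≤ n - 1 := by
  rcases le_total i j with hij | hji
  · obtain ⟨w, hw⟩ := exists_walk_length_eq_of_adj_succ hf hij
    exact ⟨w, by omega⟩
  · obtain ⟨w, hw⟩ := exists_walk_length_eq_of_adj_succ hf hji
    exact ⟨w.reverse, by rw [Walk.length_reverse]; omega⟩

theorem Walk.exists_walk_length_le_mul {f : V → W} {c : ℕ}
    (hf : ∀ ⦃a b⦄, G.Adj a b → ∃ w : H.Walk (f a) (f b), w.length ≤ c) {u v : V}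
    (w : G.Walk u v) : ∃ w' : H.Walk (f u) (f v), w'.length ≤ c * w.length := by
  induction w with
  | nil => exact ⟨.nil, by simp⟩
  | cons hab _ ih =>
    obtain ⟨w₁, h₁⟩ := hf hab
    obtain ⟨w₂, h₂⟩ := ih
    exact ⟨w₁.append w₂, by simp only [Walk.length_append, Walk.length_cons]; lia⟩

theorem Walk.abs_sub_le_length {f : V → ℤ} (hf : ∀ ⦃a b⦄, G.Adj a b → |f a - f b| ≤ 1)
    {u v : V} (w : G.Walk u v) : |f u - f v| ≤ w.length := by
  induction w with
  | nil => simp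
  | @cons a b c hab _ ih =>
    calc |f a - f c| ≤ |f a - f b| + |f b - f c| := abs_sub_le _ _ _
      _ ≤ _ := by rw [Walk.length_cons]; push_cast; linarith [hf hab]

theorem Adj.abs_dist_sub_dist_le_one {a b : V} (hab : G.Adj a b) (u : V) :
    |(G.dist u a : ℤ) - G.dist u b| ≤ 1 := by
  rw [abs_le]
  rcases hab.diff_dist_adj (u := u) with h | h | h <;> omega

theorem adj_inf_sup_of_mem_edgeSet [LinearOrder V] {e : Sym2 V} (he : e ∈ G.edgeSet) :
    G.Adj e.inf e.sup := by
  rwa [← Sym2.sortEquiv.symm_apply_apply e] at he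

end SimpleGraph

namespace expandedGraph

open SimpleGraph Sum

variable {V : Type*} [LinearOrder V] {G : SimpleGraph V} {k M : ℕ} {label : G.edgeSet ≃ Fin k}

/-- The relation generating `expandedGraph` via `SimpleGraph.fromRel`, named so that adjacency
can be analysed case by case. -/
def rel (G : SimpleGraph V) (k M : ℕ) (label : G.edgeSet ≃ Fin k) :
    (V × Fin (k + 1)) ⊕ (G.edgeSet × Fin (M - 1)) →
      (V × Fin (k + 1)) ⊕ (G.edgeSet × Fin (M - 1)) → Prop
  | inl (a, i), inl (b, j) =>
      (a = b ∧ j.val = i.val + 1) ∨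
      (M = 1 ∧ i = j ∧ ∃ e : G.edgeSet, ((label e : Fin k) : ℕ) = i.val ∧
        (e : Sym2 V) = s(a, b) ∧ a ≠ b)
  | inl (a, i), inr (e, t) =>
      i.val = ((label e : Fin k) : ℕ) ∧
      ((∃ b, (e : Sym2 V) = s(a, b) ∧ a < b ∧ t.val = 0) ∨
       (∃ b, (e : Sym2 V) = s(b, a) ∧ b < a ∧ t.val = M - 2))
  | inr (e, t), inr (e', t') => e = e' ∧ (t'.val = t.val + 1 ∨ t.val = t'.val + 1)
  | inr _, inl _ => False

theorem adj_iff {x y : (V × Fin (k + 1)) ⊕ (G.edgeSet × Fin (M - 1))} :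
    (expandedGraph G k M label).Adj x y ↔ x ≠ y ∧ (rel G k M label x y ∨ rel G k M label y x) :=
  Iff.rfl

theorem adj_short_succ {a : V} {i j : Fin (k + 1)} (h : j.val = i.val + 1) :
    (expandedGraph G k M label).Adj (inl (a, i)) (inl (a, j)) :=
  ⟨by simp [Fin.ext_iff, h], .inl (.inl ⟨rfl, h⟩)⟩

theorem adj_long_succ {e : G.edgeSet} {t t' : Fin (M - 1)} (h : t'.val = t.val + 1) :
    (expandedGraph G k M label).Adj (inr (e, t)) (inr (e, t')) :=
  ⟨by simp [Fin.ext_iff, h], .inl ⟨rfl, .inl h⟩⟩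

theorem exists_short_walk (a : V) (i j : Fin (k + 1)) :
    ∃ w : (expandedGraph G k M label).Walk (inl (a, i)) (inl (a, j)), w.length ≤ k :=
  exists_walk_length_le_of_adj_succ (f := fun i => inl (a, i)) (fun _ _ => adj_short_succ) i j

theorem exists_walk_across_of_lt (hM : 1 ≤ M) {e : G.edgeSet} {a b : V}
    (he : (e : Sym2 V) = s(a, b)) (hab : a < b) :
    ∃ w : (expandedGraph G k M label).Walk
      (inl (a, (label e).castSucc)) (inl (b, (label e).castSucc)), w.length ≤ M := by
  obtain rfl | hM2 : M = 1 ∨ 2 ≤ M := by omega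
  · have hadj : (expandedGraph G k 1 label).Adj
        (inl (a, (label e).castSucc)) (inl (b, (label e).castSucc)) :=
      ⟨by simp [hab.ne], .inl (.inr ⟨rfl, rfl, e, rfl, he, hab.ne⟩)⟩
    exact ⟨hadj.toWalk, by simp⟩
  · have first : (expandedGraph G k M label).Adj
        (inl (a, (label e).castSucc)) (inr (e, ⟨0, by omega⟩)) :=
      ⟨by simp, .inl ⟨rfl, .inl ⟨b, he, hab, rfl⟩⟩⟩
    have last : (expandedGraph G k M label).Adj
        (inr (e, ⟨M - 2, by omega⟩)) (inl (b, (label e).castSucc)) :=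
      ⟨by simp, .inr ⟨rfl, .inr ⟨a, he, hab, rfl⟩⟩⟩
    obtain ⟨w, hw⟩ := exists_walk_length_le_of_adj_succ (f := fun t => inr (e, t))
      (fun _ _ => adj_long_succ) (⟨0, by omega⟩ : Fin (M - 1)) ⟨M - 2, by omega⟩
    refine ⟨.cons first (w.concat last), ?_⟩
    simp only [Walk.length_cons, Walk.length_concat]
    omega

theorem exists_walk_across (hM : 1 ≤ M) {e : G.edgeSet} {a b : V}
    (he : (e : Sym2 V) = s(a, b)) (hab : a ≠ b) :
    ∃ w : (expandedGraph G k M label).Walk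
      (inl (a, (label e).castSucc)) (inl (b, (label e).castSucc)), w.length ≤ M := by
  rcases hab.lt_or_gt with hab | hba
  · exact exists_walk_across_of_lt hM he hab
  · obtain ⟨w, hw⟩ := exists_walk_across_of_lt hM (he.trans Sym2.eq_swap) hba
    exact ⟨w.reverse, by simpa using hw⟩

theorem exists_walk_psiMap_of_adj (hM : 1 ≤ M) (p : G.edgeSet) ⦃a b : V⦄ (hab : G.Adj a b) :
    ∃ w : (expandedGraph G k M label).Walk (psiMap G k M label p a) (psiMap G k M label p b),
      w.length ≤ 2 * k + M := by
  unfold psiMap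
  let e : G.edgeSet := ⟨s(a, b), G.mem_edgeSet.mpr hab⟩
  obtain ⟨w₁, h₁⟩ := exists_short_walk (M := M) (label := label) a (label p).castSucc
    (label e).castSucc
  obtain ⟨w₂, h₂⟩ := exists_walk_across (label := label) hM (e := e) rfl hab.ne
  obtain ⟨w₃, h₃⟩ := exists_short_walk (M := M) (label := label) b (label e).castSucc
    (label p).castSucc
  exact ⟨(w₁.append w₂).append w₃, by simp only [Walk.length_append]; omega⟩

noncomputable def potential (G : SimpleGraph V) (k M : ℕ) (u : V) :
    (V × Fin (k + 1)) ⊕ (G.edgeSet × Fin (M - 1)) → ℤ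
  | inl (a, _) => M * G.dist u a
  | inr (e, t) => M * G.dist u (e : Sym2 V).inf +
      (t.val + 1) * ((G.dist u (e : Sym2 V).sup : ℤ) - G.dist u (e : Sym2 V).inf)

theorem abs_potential_sub_le_one_of_rel (u : V)
    {x y : (V × Fin (k + 1)) ⊕ (G.edgeSet × Fin (M - 1))} (h : rel G k M label x y) :
    |potential G k M u x - potential G k M u y| ≤ 1 := by
  match x, y, h with
  | inl (a, _), inl (_, _), .inl ⟨rfl, _⟩ => simp [potential]
  | inl (a, _), inl (b, _), .inr ⟨hM, _, e, _, he, _⟩ =>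
    simpa [potential, hM] using (G.mem_edgeSet.mp (he ▸ e.2)).abs_dist_sub_dist_le_one u
  | inl (a, _), inr (e, t), ⟨_, .inl ⟨b, he, hab, ht⟩⟩ =>
    have hd := abs_le.mp ((G.mem_edgeSet.mp (he ▸ e.2)).abs_dist_sub_dist_le_one u)
    simp only [potential, he, Sym2.inf_mk, Sym2.sup_mk, inf_eq_left.mpr hab.le,
      sup_eq_right.mpr hab.le, ht]
    rw [abs_le]; push_cast; constructor <;> linarith
  | inl (a, _), inr (e, t), ⟨_, .inr ⟨b, he, hba, ht⟩⟩ =>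
    have hM : 2 ≤ M := by omega
    have hd := abs_le.mp ((G.mem_edgeSet.mp (he ▸ e.2)).abs_dist_sub_dist_le_one u)
    simp only [potential, he, Sym2.inf_mk, Sym2.sup_mk, inf_eq_left.mpr hba.le,
      sup_eq_right.mpr hba.le, ht]
    rw [abs_le]; push_cast [hM]; constructor <;> linarith
  | inr (e, t), inr (_, t'), ⟨rfl, ht⟩ =>
    have hd := abs_le.mp ((adj_inf_sup_of_mem_edgeSet e.2).abs_dist_sub_dist_le_one u)
    simp only [potential]
    rw [abs_le]
    rcases ht with ht | ht <;> rw [ht] <;> push_cast <;> constructor <;> linarith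

theorem abs_potential_sub_le_one (u : V) ⦃x y : (V × Fin (k + 1)) ⊕ (G.edgeSet × Fin (M - 1))⦄
    (h : (expandedGraph G k M label).Adj x y) :
    |potential G k M u x - potential G k M u y| ≤ 1 := by
  rcases adj_iff.mp h with ⟨-, hxy | hyx⟩
  · exact abs_potential_sub_le_one_of_rel u hxy
  · rw [abs_sub_comm]
    exact abs_potential_sub_le_one_of_rel u hyx

theorem potential_psiMap (label : G.edgeSet ≃ Fin k) (p : G.edgeSet) (u v : V) :
    potential G k M u (psiMap G k M label p v) = M * G.dist u v :=
  rfl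

end expandedGraph

open SimpleGraph expandedGraph in
theorem expandedGraph_dist_bounds_general {V : Type*} [LinearOrder V]
    (G : SimpleGraph V) (hG : G.Connected) (k M : ℕ) (hM : 1 ≤ M)
    (label : G.edgeSet ≃ Fin k) (p : G.edgeSet) (u v : V) :
    M * G.dist u v ≤
      (expandedGraph G k M label).dist (psiMap G k M label p u) (psiMap G k M label p v) ∧
    (expandedGraph G k M label).dist (psiMap G k M label p u) (psiMap G k M label p v) ≤
      (2 * k + M) * G.dist u v := by
  obtain ⟨wG, hwG⟩ := hG.exists_walk_length_eq_dist u v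
  obtain ⟨wH, hwH⟩ :=
    wG.exists_walk_length_le_mul (exists_walk_psiMap_of_adj (label := label) hM p)
  refine ⟨?_, hwG ▸ (dist_le wH).trans hwH⟩
  obtain ⟨w, hw⟩ := Reachable.exists_walk_length_eq_dist ⟨wH⟩
  have hpot := w.abs_sub_le_length (abs_potential_sub_le_one u)
  rw [potential_psiMap, potential_psiMap, dist_self, hw, Nat.cast_zero, mul_zero, zero_sub,
    abs_neg, abs_of_nonneg (by positivity)] at hpot
  exact_mod_cast hpot

theorem expandedGraph_dist_bounds {V : Type*} [Fintype V] [LinearOrder V]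
    (G : SimpleGraph V) (hG : G.Connected) (k M : ℕ) (hM : 1 ≤ M)
    (label : G.edgeSet ≃ Fin k) (p : G.edgeSet) (u v : V) :
    M * G.dist u v ≤
      (expandedGraph G k M label).dist (psiMap G k M label p u) (psiMap G k M label p v) ∧
    (expandedGraph G k M label).dist (psiMap G k M label p u) (psiMap G k M label p v) ≤
      (2 * k + M) * G.dist u v :=
  expandedGraph_dist_bounds_general G hG k M hM label p u v
end

section
/- Let τ: V(G) → X be a map from the vertices of a finite graph G into a normed space X satisfying ‖τ(u)−τ(v)‖ ≥ d_G(u,v) and ‖τ(u)−τ(v)‖ ≤ L·d_G(u,v). Let W ⊇ X be a normed space with dim(W/X) = e(G) and let {e_{uv}}_{uv∈E(G)} be unit vectors in W that lift an Auerbach basis of W/X, with biorthogonal functionals e*_{uv} ∈ W*, ‖e*_{uv}‖=1, vanishing on X. Define f on the thickening TG by mapping the point of t(uv) at distance α ∈ [0,1] from u to α·τ(v) + (1−α)·τ(u) + min{2α, 2(1−α)}·e_{uv}. Then f is Lipschitz with constant at most L+2. -/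
open Classical in
/-- The geodesic distance in the thickening `TG` of a graph `G` between the point of
the segment `t(uv)` at parameter `α` from `u` and the point of the segment `t(wz)` at
parameter `β` from `w`: either a direct route along a common segment, or a route
through the endpoints, using the shortest path metric of `G` between endpoints. -/
noncomputable def thickeningDist {V : Type*} (G : SimpleGraph V)
    (u v : V) (α : ℝ) (w z : V) (β : ℝ) : ℝ :=
  let through := min (min (α + G.dist u w + β) (α + G.dist u z + (1 - β)))
    (min ((1 - α) + G.dist v w + β) ((1 - α) + G.dist v z + (1 - β)))
  if (u, v) = (w, z) then min |α - β| through
  else if (u, v) = (z, w) then min |α - (1 - β)| through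
  else through

/-!
The image of an edge `ab` is the straight segment from `τ a` to `τ b` pushed out by a tent of
height at most `1` in the direction `E a b`. Along one edge the velocity is
`τ b - τ a ± 2 E a b`, of norm at most `L + 2`. A geodesic of the thickening either stays on a
common edge, where this bound suffices, or leaves both points' edges through endpoints; then the
triangle inequality splits it into two partial edges and a graph path, where `τ` is `L`-Lipschitz.
-/

open Set

section Tent

variable {W : Type*} [NormedAddCommGroup W] [NormedSpace ℝ W]

noncomputable def tentPath (p q e : W) (t : ℝ) : W :=
  t • q + (1 - t) • p + min (2 * t) (2 * (1 - t)) • e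

@[simp]
lemma tentPath_zero (p q e : W) : tentPath p q e 0 = p := by
  simp [tentPath]

lemma tentPath_symm (p q e : W) (t : ℝ) : tentPath p q e t = tentPath q p e (1 - t) := by
  simp only [tentPath]
  rw [sub_sub_cancel, min_comm]
  abel

lemma abs_tentHeight_sub_le (s t : ℝ) :
    |min (2 * s) (2 * (1 - s)) - min (2 * t) (2 * (1 - t))| ≤ 2 * |s - t| := by
  have h := abs_min_sub_min_le_max (2 * s) (2 * (1 - s)) (2 * t) (2 * (1 - t))
  rwa [show 2 * (1 - s) - 2 * (1 - t) = -(2 * s - 2 * t) by ring, abs_neg, max_self,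
    ← mul_sub, abs_mul, abs_two] at h

lemma norm_tentPath_sub_tentPath_le (p q : W) {e : W} (he : ‖e‖ ≤ 1) (s t : ℝ) :
    ‖tentPath p q e s - tentPath p q e t‖ ≤ (‖q - p‖ + 2) * |s - t| := by
  have hdiff : tentPath p q e s - tentPath p q e t =
      (s - t) • (q - p) + (min (2 * s) (2 * (1 - s)) - min (2 * t) (2 * (1 - t))) • e := by
    simp only [tentPath]
    module
  calc ‖tentPath p q e s - tentPath p q e t‖
      ≤ |s - t| * ‖q - p‖ + |min (2 * s) (2 * (1 - s)) - min (2 * t) (2 * (1 - t))| * ‖e‖ := by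
        rw [hdiff, ← Real.norm_eq_abs, ← Real.norm_eq_abs, ← norm_smul, ← norm_smul]
        exact norm_add_le _ _
    _ ≤ |s - t| * ‖q - p‖ + 2 * |s - t| * 1 := by
        gcongr
        exact abs_tentHeight_sub_le s t
    _ = (‖q - p‖ + 2) * |s - t| := by ring

end Tent

section Graph

variable {V W : Type*} [NormedAddCommGroup W] {G : SimpleGraph V} {τ : V → W} {E : V → V → W}
  {L : ℝ}

lemma norm_sub_le_of_adj (hτ : ∀ a b, ‖τ a - τ b‖ ≤ L * G.dist a b) {a b : V}
    (hab : G.Adj a b) : ‖τ a - τ b‖ ≤ L := by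
  simpa [SimpleGraph.dist_eq_one_iff_adj.mpr hab] using hτ a b

variable [NormedSpace ℝ W]

lemma tentPath_edge_symm (hEsymm : ∀ a b, E a b = E b a) (a b : V) (t : ℝ) :
    tentPath (τ a) (τ b) (E a b) t = tentPath (τ b) (τ a) (E b a) (1 - t) := by
  rw [tentPath_symm, hEsymm]

lemma norm_tentPath_sub_tentPath_le_of_adj (hτ : ∀ a b, ‖τ a - τ b‖ ≤ L * G.dist a b)
    (hE : ∀ a b, G.Adj a b → ‖E a b‖ ≤ 1) {a b : V} (hab : G.Adj a b) (s t : ℝ) :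
    ‖tentPath (τ a) (τ b) (E a b) s - tentPath (τ a) (τ b) (E a b) t‖ ≤ (L + 2) * |s - t| :=
  (norm_tentPath_sub_tentPath_le _ _ (hE a b hab) s t).trans <| by
    gcongr
    rw [norm_sub_rev]
    exact norm_sub_le_of_adj hτ hab

lemma norm_tentPath_sub_tentPath_le_via (hτ : ∀ a b, ‖τ a - τ b‖ ≤ L * G.dist a b)
    (hE : ∀ a b, G.Adj a b → ‖E a b‖ ≤ 1) {a b c d : V} (hab : G.Adj a b) (hcd : G.Adj c d)
    {s t : ℝ} (hs : 0 ≤ s) (ht : 0 ≤ t) :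
    ‖tentPath (τ a) (τ b) (E a b) s - tentPath (τ c) (τ d) (E c d) t‖ ≤
      (L + 2) * (s + G.dist a c + t) := by
  have hab' := norm_tentPath_sub_tentPath_le_of_adj hτ hE hab s 0
  have hcd' := norm_tentPath_sub_tentPath_le_of_adj hτ hE hcd t 0
  simp only [tentPath_zero, sub_zero, abs_of_nonneg hs, abs_of_nonneg ht] at hab' hcd'
  have hac : L * G.dist a c ≤ (L + 2) * G.dist a c := by gcongr; linarith
  calc ‖tentPath (τ a) (τ b) (E a b) s - tentPath (τ c) (τ d) (E c d) t‖
      ≤ ‖tentPath (τ a) (τ b) (E a b) s - τ a‖ + ‖τ a - τ c‖ +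
          ‖tentPath (τ c) (τ d) (E c d) t - τ c‖ := by
        simpa only [dist_eq_norm, norm_sub_rev (τ c)] using dist_triangle4 _ (τ a) (τ c) _
    _ ≤ (L + 2) * s + (L + 2) * G.dist a c + (L + 2) * t := by
        gcongr
        exact (hτ a c).trans hac
    _ = (L + 2) * (s + G.dist a c + t) := by ring

lemma norm_tentPath_sub_tentPath_le_through_endpoints
    (hτ : ∀ a b, ‖τ a - τ b‖ ≤ L * G.dist a b) (hE : ∀ a b, G.Adj a b → ‖E a b‖ ≤ 1)
    (hEsymm : ∀ a b, E a b = E b a) {u v w z : V} (huv : G.Adj u v) (hwz : G.Adj w z)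
    {α β : ℝ} (hα : α ∈ Icc (0 : ℝ) 1) (hβ : β ∈ Icc (0 : ℝ) 1) :
    ‖tentPath (τ u) (τ v) (E u v) α - tentPath (τ w) (τ z) (E w z) β‖ ≤
      (L + 2) * min (min (α + G.dist u w + β) (α + G.dist u z + (1 - β)))
        (min ((1 - α) + G.dist v w + β) ((1 - α) + G.dist v z + (1 - β))) := by
  obtain ⟨hα0, hα1⟩ := hα
  obtain ⟨hβ0, hβ1⟩ := hβ
  have hα' : 0 ≤ 1 - α := by linarith
  have hβ' : 0 ≤ 1 - β := by linarith
  have huv' := tentPath_edge_symm (τ := τ) hEsymm u v α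
  have hwz' := tentPath_edge_symm (τ := τ) hEsymm w z β
  refine min_rec' (fun m => _ ≤ (L + 2) * m) (min_rec' (fun m => _ ≤ (L + 2) * m) ?_ ?_)
    (min_rec' (fun m => _ ≤ (L + 2) * m) ?_ ?_)
  · exact norm_tentPath_sub_tentPath_le_via hτ hE huv hwz hα0 hβ0
  · rw [hwz']
    exact norm_tentPath_sub_tentPath_le_via hτ hE huv hwz.symm hα0 hβ'
  · rw [huv']
    exact norm_tentPath_sub_tentPath_le_via hτ hE huv.symm hwz hα' hβ0
  · rw [huv', hwz']
    exact norm_tentPath_sub_tentPath_le_via hτ hE huv.symm hwz.symm hα' hβ'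

end Graph

theorem thickening_embedding_lipschitz_general
    {V : Type*} (G : SimpleGraph V)
    {W : Type*} [NormedAddCommGroup W] [NormedSpace ℝ W]
    (L : ℝ)
    (τ : V → W)
    (hτupp : ∀ a b : V, ‖τ a - τ b‖ ≤ L * (G.dist a b : ℝ))
    -- the lifted Auerbach basis {e_uv} and its biorthogonal functionals {e*_uv}
    (E : V → V → W) (hEsymm : ∀ a b : V, E a b = E b a)
    (hEnorm : ∀ a b : V, G.Adj a b → ‖E a b‖ = 1) :
    -- the map f on the thickening TG is Lipschitz with constant at most L + 2
    ∀ (u v w z : V) (α β : ℝ), G.Adj u v → G.Adj w z →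
      α ∈ Set.Icc (0 : ℝ) 1 → β ∈ Set.Icc (0 : ℝ) 1 →
      ‖(α • τ v + (1 - α) • τ u + min (2 * α) (2 * (1 - α)) • E u v) -
        (β • τ z + (1 - β) • τ w + min (2 * β) (2 * (1 - β)) • E w z)‖ ≤
        (L + 2) * thickeningDist G u v α w z β := by
  intro u v w z α β huv hwz hα hβ
  have hE : ∀ a b, G.Adj a b → ‖E a b‖ ≤ 1 := fun a b hab => (hEnorm a b hab).le
  have through :=
    norm_tentPath_sub_tentPath_le_through_endpoints hτupp hE hEsymm huv hwz hα hβ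
  have along := norm_tentPath_sub_tentPath_le_of_adj hτupp hE huv
  change ‖tentPath (τ u) (τ v) (E u v) α - tentPath (τ w) (τ z) (E w z) β‖ ≤ _
  simp only [thickeningDist]
  split_ifs with hsame hflip
  · obtain ⟨rfl, rfl⟩ := Prod.mk.inj hsame
    exact min_rec' (fun m => _ ≤ (L + 2) * m) (along α β) through
  · obtain ⟨rfl, rfl⟩ := Prod.mk.inj hflip
    refine min_rec' (fun m => _ ≤ (L + 2) * m) ?_ through
    rw [tentPath_edge_symm hEsymm v u]
    exact along α (1 - β)
  · exact through

theorem thickening_embedding_lipschitz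
    {V : Type*} [Fintype V] [DecidableEq V] (G : SimpleGraph V) (hG : G.Connected)
    {W : Type*} [NormedAddCommGroup W] [NormedSpace ℝ W]
    (X : Submodule ℝ W) (L : ℝ)
    (τ : V → W) (hτX : ∀ a : V, τ a ∈ X)
    (hτlow : ∀ a b : V, (G.dist a b : ℝ) ≤ ‖τ a - τ b‖)
    (hτupp : ∀ a b : V, ‖τ a - τ b‖ ≤ L * (G.dist a b : ℝ))
    -- dim (W/X) = e(G)
    (hdim : Module.finrank ℝ (W ⧸ X) = Nat.card G.edgeSet)
    -- the lifted Auerbach basis {e_uv} and its biorthogonal functionals {e*_uv}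
    (E : V → V → W) (hEsymm : ∀ a b : V, E a b = E b a)
    (hEnorm : ∀ a b : V, G.Adj a b → ‖E a b‖ = 1)
    (φ : V → V → (W →L[ℝ] ℝ)) (hφsymm : ∀ a b : V, φ a b = φ b a)
    (hφnorm : ∀ a b : V, G.Adj a b → ‖φ a b‖ = 1)
    (hbiorth : ∀ a b c d : V, G.Adj a b → G.Adj c d →
      φ a b (E c d) = if s(a, b) = s(c, d) then 1 else 0)
    (hφX : ∀ a b : V, G.Adj a b → ∀ x ∈ X, φ a b x = 0) :
    -- the map f on the thickening TG is Lipschitz with constant at most L + 2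
    ∀ (u v w z : V) (α β : ℝ), G.Adj u v → G.Adj w z →
      α ∈ Set.Icc (0 : ℝ) 1 → β ∈ Set.Icc (0 : ℝ) 1 →
      ‖(α • τ v + (1 - α) • τ u + min (2 * α) (2 * (1 - α)) • E u v) -
        (β • τ z + (1 - β) • τ w + min (2 * β) (2 * (1 - β)) • E w z)‖ ≤
        (L + 2) * thickeningDist G u v α w z β :=
  thickening_embedding_lipschitz_general G L τ hτupp E hEsymm hEnorm
end

section
/- Let L be a normed space, let u, v, w, z ∈ L ⊕₁ ℝ, let M, N, N' ∈ ℕ with N, N' ≥ 1, let x_{uv}, x_{wz} ∈ L with ‖x_{uv}‖, ‖x_{wz}‖ ≤ C, and suppose there are functionals x*_{uv}, x*_{wz} ∈ L* of norm ≤ C with x*_{uv}(x_{uv}) = 1, x*_{uv}(x_{wz}) = 0, x*_{wz}(x_{wz}) = 1, x*_{wz}(x_{uv}) = 0, and both functionals annihilating P_L((1−m/N)Mu + (m/N)Mv − (1−p/N')Mw − (p/N')Mz), where P_L is the projection onto L. Set B = (1−m/N)Mu + (m/N)Mv + m·x_{uv} − (1−p/N')Mw − (p/N')Mz − p·x_{wz}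 for integers 0 ≤ m ≤ N/2, 0 ≤ p ≤ N'/2. Then ‖B‖ ≥ max{m, p}/C. -/
theorem ContinuousLinearMap.norm_apply_div_le_of_opNorm_le {𝕜 E F : Type*}
    [NontriviallyNormedField 𝕜] [SeminormedAddCommGroup E] [NormedSpace 𝕜 E]
    [SeminormedAddCommGroup F] [NormedSpace 𝕜 F] {C : ℝ} (hC : 0 < C)
    {φ : E →L[𝕜] F} (hφ : ‖φ‖ ≤ C) (x : E) : ‖φ x‖ / C ≤ ‖x‖ := by
  rw [div_le_iff₀ hC, mul_comm]
  exact φ.le_of_opNorm_le hφ x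

theorem ContinuousLinearMap.max_norm_apply_div_le_of_opNorm_le {𝕜 E F : Type*}
    [NontriviallyNormedField 𝕜] [SeminormedAddCommGroup E] [NormedSpace 𝕜 E]
    [SeminormedAddCommGroup F] [NormedSpace 𝕜 F] {C : ℝ} (hC : 0 < C)
    {φ ψ : E →L[𝕜] F} (hφ : ‖φ‖ ≤ C) (hψ : ‖ψ‖ ≤ C) (x : E) :
    max ‖φ x‖ ‖ψ x‖ / C ≤ ‖x‖ := by
  rw [← max_div_div_right hC.le]
  exact max_le (φ.norm_apply_div_le_of_opNorm_le hC hφ x)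
    (ψ.norm_apply_div_le_of_opNorm_le hC hψ x)

theorem norm_B_ge_max_div_C_general
    {L : Type*} [NormedAddCommGroup L] [NormedSpace ℝ L]
    (C : ℝ) (hC : 0 < C)
    (x_uv x_wz : L)
    (φ_uv φ_wz : L →L[ℝ] ℝ) (hφ_uv : ‖φ_uv‖ ≤ C) (hφ_wz : ‖φ_wz‖ ≤ C)
    (h11 : φ_uv x_uv = 1) (h12 : φ_uv x_wz = 0)
    (h22 : φ_wz x_wz = 1) (h21 : φ_wz x_uv = 0)
    (m p : ℕ)
    (A : L × ℝ)
    -- both functionals annihilate P_L A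
    (hann_uv : φ_uv A.1 = 0) (hann_wz : φ_wz A.1 = 0)
    (B : L × ℝ)
    -- B = A + m·x_{uv} − p·x_{wz}  (with x_{uv}, x_{wz} ∈ L viewed inside L ⊕₁ ℝ)
    (hB : B = A + (m : ℝ) • ((x_uv, 0) : L × ℝ) - (p : ℝ) • ((x_wz, 0) : L × ℝ)) :
    -- ‖B‖ ≥ max{m, p}/C, where ‖(x, t)‖ = ‖x‖ + |t| is the norm of L ⊕₁ ℝ
    max (m : ℝ) (p : ℝ) / C ≤ ‖B.1‖ + |B.2| := by
  have hB₁ : B.1 = A.1 + (m : ℝ) • x_uv - (p : ℝ) • x_wz := by simp [hB]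
  have huv : φ_uv B.1 = m := by simp [hB₁, hann_uv, h11, h12]
  have hwz : φ_wz B.1 = -p := by simp [hB₁, hann_wz, h22, h21]
  have hmax := φ_uv.max_norm_apply_div_le_of_opNorm_le hC hφ_uv hφ_wz B.1
  rw [huv, hwz, norm_neg, Real.norm_natCast, Real.norm_natCast] at hmax
  exact hmax.trans (le_add_of_nonneg_right (abs_nonneg _))

theorem norm_B_ge_max_div_C
    {L : Type*} [NormedAddCommGroup L] [NormedSpace ℝ L]
    (u v w z : L × ℝ) (M N N' : ℕ) (hN : 1 ≤ N) (hN' : 1 ≤ N')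
    (C : ℝ) (hC : 0 < C)
    (x_uv x_wz : L) (hx_uv : ‖x_uv‖ ≤ C) (hx_wz : ‖x_wz‖ ≤ C)
    (φ_uv φ_wz : L →L[ℝ] ℝ) (hφ_uv : ‖φ_uv‖ ≤ C) (hφ_wz : ‖φ_wz‖ ≤ C)
    (h11 : φ_uv x_uv = 1) (h12 : φ_uv x_wz = 0)
    (h22 : φ_wz x_wz = 1) (h21 : φ_wz x_uv = 0)
    (m p : ℕ) (hm : (m : ℝ) ≤ N / 2) (hp : (p : ℝ) ≤ N' / 2)
    (A : L × ℝ)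
    -- A = (1−m/N)Mu + (m/N)Mv − (1−p/N')Mw − (p/N')Mz
    (hA : A = ((1 - (m : ℝ) / N) * M) • u + (((m : ℝ) / N) * M) • v
      - ((1 - (p : ℝ) / N') * M) • w - (((p : ℝ) / N') * M) • z)
    -- both functionals annihilate P_L A
    (hann_uv : φ_uv A.1 = 0) (hann_wz : φ_wz A.1 = 0)
    (B : L × ℝ)
    -- B = A + m·x_{uv} − p·x_{wz}  (with x_{uv}, x_{wz} ∈ L viewed inside L ⊕₁ ℝ)
    (hB : B = A + (m : ℝ) • ((x_uv, 0) : L × ℝ) - (p : ℝ) • ((x_wz, 0) : L × ℝ)) :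
    -- ‖B‖ ≥ max{m, p}/C, where ‖(x, t)‖ = ‖x‖ + |t| is the norm of L ⊕₁ ℝ
    max (m : ℝ) (p : ℝ) / C ≤ ‖B.1‖ + |B.2| :=
  norm_B_ge_max_div_C_general C hC x_uv x_wz φ_uv φ_wz hφ_uv hφ_wz h11 h12 h22 h21 m p A hann_uv
    hann_wz B hB
end
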